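/- Let a, u, l ∈ ℝ with u > 0 and l < 0, and let x ≥ 0. Then the constraint -l² ≤ sign(a)·a²·x ≤ u² holds if and only if (max{a/u, a/l})²·x ≤ 1, where sign(0) = 0. -/
import Mathlib


/-- For `u > 0`, `l < 0`, and `x ≥ 0`, the constraint `-l² ≤ sign(a)·a²·x ≤ u²` is
equivalent to `(max{a/u, a/l})²·x ≤ 1` (with `sign 0 = 0`). -/
theorem stmt6 (a u l x : ℝ) (hu : 0 < u) (hl : l < 0) (hx : 0 ≤ x) :
    (-l ^ 2 ≤ Real.sign a * a ^ 2 * x ∧ Real.sign a * a ^ 2 * x ≤ u ^ 2) ↔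
      (max (a / u) (a / l)) ^ 2 * x ≤ 1 := by
  rcases lt_trichotomy a 0 with ha | ha | ha
  · rw [Real.sign_of_neg ha]
    have h1 : a / l > 0 := div_pos_of_neg_of_neg ha hl
    have h2 : a / u < 0 := div_neg_of_neg_of_pos ha hu
    rw [max_eq_right (le_of_lt (h2.trans h1))]
    constructor
    · rintro ⟨h, -⟩
      rw [div_pow]
      rw [div_mul_eq_mul_div, div_le_one (by nlinarith)]
      nlinarith
    · intro h
      rw [div_pow, div_mul_eq_mul_div, div_le_one (by nlinarith)] at h
      constructor
      · nlinarith
      · nlinarith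
  · subst ha; simp [hx, le_of_lt hl, le_of_lt hu]; nlinarith
  · rw [Real.sign_of_pos ha]
    have h1 : a / u > 0 := div_pos ha hu
    have h2 : a / l < 0 := div_neg_of_pos_of_neg ha hl
    rw [max_eq_left (le_of_lt (h2.trans h1))]
    constructor
    · rintro ⟨-, h⟩
      rw [div_pow, div_mul_eq_mul_div, div_le_one (by nlinarith)]
      nlinarith
    · intro h
      rw [div_pow, div_mul_eq_mul_div, div_le_one (by nlinarith)] at h
      constructor
      · nlinarith
      · nlinarith
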